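/- For a Young tableau T with underlying group elements c_T = Σ_{g∈R(T)} g and d_T = Σ_{h∈C(T)} sgn(h)·h in Q[Σ_n], the Young symmetrizer e_T = c_T · d_T satisfies e_T² = n_T · e_T for some nonzero rational number n_T (namely n_T = n!/dim of the corresponding irreducible representation); in particular e_T is a quasi-idempotent. -/

import Mathlib

/-!
Let `a = ∑_{p ∈ R(T)} p`, `b = ∑_{q ∈ C(T)} sgn(q) q` and `e = a b`. Then `p e = e` and
`e q = sgn(q) e` for `p ∈ R(T)`, `q ∈ C(T)`, and an element `f` with these two properties is
determined by its coefficient at `1` (von Neumann's lemma). Indeed, each permutation `g` either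
factors as `g = p q`, and then `f(g) = ± f(1)`, or two entries of one row of `T` lie in one
column of `g⁻¹ T`; for their transposition `τ ∈ R(T)` the odd permutation `g⁻¹ τ g ∈ C(T)`
satisfies `τ g (g⁻¹ τ g) = g`, so `f(g) = -f(g)`. The factorization in the first case comes from
the filling that puts each entry in its row of `T` and its column of `g⁻¹ T`: it has the row and
column lengths of the diagram, hence fills exactly the diagram.

Applied to `f = e² - e²(1) e`, this gives `e² = e²(1) e`. Since `R(T) ∩ C(T) = 1`, `e(1) = 1`,
so left multiplication by `e` has trace `n! ≠ 0`; hence `e` is not nilpotent and `e²(1) ≠ 0`.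
-/

open Finset Equiv MonoidAlgebra

namespace MonoidAlgebra

variable {k G : Type*} [Field k] [Group G]

theorem trace_mulLeft [Fintype G] (x : MonoidAlgebra k G) :
    LinearMap.trace k _ (LinearMap.mulLeft k x) = Fintype.card G * x.coeff 1 := by
  classical
  rw [LinearMap.trace_eq_matrix_trace k (MonoidAlgebra.basis G k), Matrix.trace]
  simp only [Matrix.diag, LinearMap.toMatrix_apply, basis_apply, LinearMap.mulLeft_apply]
  change ∑ g, (x * single g 1).coeff g = _
  simp

theorem coeff_one_eq_zero_of_isNilpotent [Fintype G] [CharZero k] {x : MonoidAlgebra k G}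
    (hx : IsNilpotent x) : x.coeff 1 = 0 := by
  have h := LinearMap.isNilpotent_trace_of_isNilpotent
    ((LinearMap.isNilpotent_mulLeft_iff k x).mpr hx)
  rw [trace_mulLeft] at h
  simpa [Fintype.card_ne_zero] using h.eq_zero

theorem coeff_mul_left_eq {f : MonoidAlgebra k G} {p : G} (hf : single p 1 * f = f) (x : G) :
    f.coeff (p * x) = f.coeff x := by
  rw [← hf, coeff_single_mul_mul, one_mul, hf]

theorem coeff_eq_mul_coeff_mul_right {f : MonoidAlgebra k G} {q : G} {c : k}
    (hf : f * single q 1 = c • f) (x : G) : f.coeff x = c * f.coeff (x * q) := by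
  rw [← smul_eq_mul, ← coeff_smul_apply, ← hf, coeff_mul_single_mul, mul_one]

theorem eq_zero_of_coeff_one_eq_zero [NeZero (2 : k)] {P Q : Subgroup G} (χ : G →* ℤˣ)
    (hsplit : ∀ g : G, (∃ p ∈ P, ∃ q ∈ Q, g = p * q) ∨
      ∃ p ∈ P, ∃ q ∈ Q, χ q = -1 ∧ p * g * q = g)
    {f : MonoidAlgebra k G} (hP : ∀ p ∈ P, single p 1 * f = f)
    (hQ : ∀ q ∈ Q, f * single q 1 = ((χ q : ℤ) : k) • f) (h1 : f.coeff 1 = 0) : f = 0 := by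
  ext g
  rcases hsplit g with ⟨p, hp, q, hq, rfl⟩ | ⟨p, hp, q, hq, hχ, hg⟩
  · have hχ : ((χ q : ℤ) : k) ≠ 0 := by
      rcases Int.units_eq_one_or (χ q) with h | h <;> simp [h]
    have := coeff_eq_mul_coeff_mul_right (hQ q hq) 1
    rw [h1, one_mul, eq_comm, mul_eq_zero] at this
    rw [coeff_mul_left_eq (hP p hp), this.resolve_left hχ, coeff_zero, Finsupp.zero_apply]
  · have := coeff_eq_mul_coeff_mul_right (hQ q hq) g
    rw [← coeff_mul_left_eq (hP p hp) (g * q), ← mul_assoc, hg, hχ, Units.val_neg,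
      Units.val_one, Int.cast_neg, Int.cast_one] at this
    have h2 : (2 : k) * f.coeff g = 0 := by linear_combination this
    exact (mul_eq_zero.mp h2).resolve_left two_ne_zero

section Symmetrizer

variable (k) (P Q : Subgroup G) [Fintype P] [Fintype Q] (χ : G →* ℤˣ)

noncomputable def subgroupSum : MonoidAlgebra k G := ∑ p : P, single (p : G) 1

noncomputable def twistedSubgroupSum : MonoidAlgebra k G :=
  ∑ q : Q, single (q : G) ((χ q : ℤ) : k)

noncomputable def symmetrizer : MonoidAlgebra k G := subgroupSum k P * twistedSubgroupSum k Q χ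

variable {k P Q χ}

theorem single_mul_subgroupSum {p : G} (hp : p ∈ P) :
    single p 1 * subgroupSum k P = subgroupSum k P := by
  simp only [subgroupSum, Finset.mul_sum, single_mul_single, one_mul]
  exact Fintype.sum_equiv (Equiv.mulLeft ⟨p, hp⟩) _ _ fun _ => rfl

theorem twistedSubgroupSum_mul_single {q : G} (hq : q ∈ Q) :
    twistedSubgroupSum k Q χ * single q 1 =
      ((χ q : ℤ) : k) • twistedSubgroupSum k Q χ := by
  simp only [twistedSubgroupSum, Finset.sum_mul, Finset.smul_sum, single_mul_single, mul_one,
    smul_single']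
  refine Fintype.sum_equiv (Equiv.mulRight ⟨q, hq⟩) _ _ fun x => ?_
  simp [← Int.cast_mul, ← Units.val_mul, mul_left_comm (χ q), Int.units_mul_self]

theorem coeff_twistedSubgroupSum [DecidablePred (· ∈ Q)] (g : G) :
    (twistedSubgroupSum k Q χ).coeff g =
      if g ∈ Q then ((χ g : ℤ) : k) else 0 := by
  classical
  simp only [twistedSubgroupSum, coeff_sum, Finset.sum_apply', coeff_single, Finsupp.single_apply]
  split_ifs with hg
  · rw [Fintype.sum_eq_single ⟨g, hg⟩] <;> simp +contextual [Subtype.ext_iff]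
  · exact Fintype.sum_eq_zero _ fun x => if_neg fun h : (x : G) = g => hg (h ▸ x.2)

theorem single_mul_symmetrizer {p : G} (hp : p ∈ P) :
    single p 1 * symmetrizer k P Q χ = symmetrizer k P Q χ := by
  rw [symmetrizer, ← mul_assoc, single_mul_subgroupSum hp]

theorem symmetrizer_mul_single {q : G} (hq : q ∈ Q) :
    symmetrizer k P Q χ * single q 1 = ((χ q : ℤ) : k) • symmetrizer k P Q χ := by
  rw [symmetrizer, mul_assoc, twistedSubgroupSum_mul_single hq, mul_smul_comm]

theorem coeff_one_symmetrizer (hPQ : Disjoint P Q) :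
    (symmetrizer k P Q χ).coeff 1 = 1 := by
  classical
  simp only [symmetrizer, subgroupSum, Finset.sum_mul, coeff_sum, Finset.sum_apply',
    coeff_single_mul_apply, one_mul, mul_one, coeff_twistedSubgroupSum]
  rw [Fintype.sum_eq_single 1]
  · simp
  · intro p hp
    rw [if_neg]
    intro hpQ
    exact hp (Subtype.ext (inv_eq_one.mp (Subgroup.disjoint_def.mp hPQ (inv_mem p.2) hpQ)))

theorem exists_symmetrizer_mul_self_eq_smul [Fintype G] [CharZero k] (hPQ : Disjoint P Q)
    (hsplit : ∀ g : G, (∃ p ∈ P, ∃ q ∈ Q, g = p * q) ∨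
      ∃ p ∈ P, ∃ q ∈ Q, χ q = -1 ∧ p * g * q = g) :
    ∃ c : k, c ≠ 0 ∧
      symmetrizer k P Q χ * symmetrizer k P Q χ = c • symmetrizer k P Q χ := by
  set e : MonoidAlgebra k G := symmetrizer k P Q χ
  have he1 : e.coeff 1 = 1 := coeff_one_symmetrizer hPQ
  have hl : ∀ p ∈ P, single p 1 * e = e := fun _ => single_mul_symmetrizer
  have hr : ∀ q ∈ Q, e * single q 1 = ((χ q : ℤ) : k) • e :=
    fun _ => symmetrizer_mul_single
  set c := (e * e).coeff 1
  have hsq : e * e = c • e := by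
    rw [← sub_eq_zero]
    refine eq_zero_of_coeff_one_eq_zero χ hsplit (fun p hp => ?_) (fun q hq => ?_) ?_
    · rw [mul_sub, ← mul_assoc, hl p hp, mul_smul_comm, hl p hp]
    · rw [sub_mul, mul_assoc, hr q hq, smul_mul_assoc, hr q hq, mul_smul_comm, smul_sub, smul_comm]
    · simp [c, he1]
  refine ⟨c, fun hc => ?_, hsq⟩
  rw [hc, zero_smul] at hsq
  simpa [he1] using coeff_one_eq_zero_of_isNilpotent ⟨2, (sq e).trans hsq⟩

end Symmetrizer

end MonoidAlgebra

namespace Equiv.Perm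

variable {α β : Type*}

def fiberSubgroup (f : α → β) : Subgroup (Perm α) where
  carrier := {g | ∀ a, f (g a) = f a}
  mul_mem' hg hh a := (hg _).trans (hh a)
  one_mem' _ := rfl
  inv_mem' {g} hg a := by simpa using (hg (g⁻¹ a)).symm

theorem swap_mem_fiberSubgroup [DecidableEq α] {f : α → β} {a b : α} (h : f a = f b) :
    swap a b ∈ fiberSubgroup f := by
  intro c
  rcases eq_or_ne c a with rfl | hca
  · simp [h]
  rcases eq_or_ne c b with rfl | hcb
  · simp [h]
  · rw [swap_apply_of_ne_of_ne hca hcb]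

theorem disjoint_fiberSubgroup {γ : Type*} {f : α → β} {f' : α → γ}
    (h : Function.Injective fun a => (f a, f' a)) :
    _root_.Disjoint (fiberSubgroup f) (fiberSubgroup f') :=
  Subgroup.disjoint_def.mpr fun hg hg' => Equiv.ext fun a => h (Prod.ext (hg a) (hg' a))

end Equiv.Perm

namespace YoungDiagram

theorem eq_cells_of_card_filter (μ : YoungDiagram) {S : Finset (ℕ × ℕ)}
    (hrow : ∀ i, #(S.filter (·.1 = i)) = μ.rowLen i)
    (hcol : ∀ j, #(S.filter (·.2 = j)) = μ.colLen j) :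
    S = μ.cells := by
  suffices H : ∀ j, S.filter (·.2 = j) = μ.col j by
    ext c
    simpa [mem_col_iff] using Finset.ext_iff.mp (H c.2) c
  intro j
  induction j using Nat.strong_induction_on with
  | _ j IH =>
  refine eq_of_subset_of_card_le (fun c hc => ?_) (by rw [hcol, colLen_eq_card])
  obtain ⟨hcS, rfl⟩ := mem_filter.mp hc
  refine mem_col_iff.mpr ⟨?_, rfl⟩
  by_contra hcμ
  have hlen : μ.rowLen c.1 ≤ c.2 := not_lt.mp (by rwa [← mem_iff_lt_rowLen])
  -- otherwise row `c.1` of `S` has `rowLen c.1 + 1` cells: those of `μ` (by induction) and `c`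
  have hsub :
      (insert c.2 (range (μ.rowLen c.1))).image (Prod.mk c.1) ⊆ S.filter (·.1 = c.1) := by
    simp only [image_insert, insert_subset_iff, mem_filter, hcS, and_true, true_and]
    intro x hx
    obtain ⟨j', hj', rfl⟩ := mem_image.mp hx
    have hj' : j' < μ.rowLen c.1 := mem_range.mp hj'
    have hmem : (c.1, j') ∈ μ.col j' := mem_col_iff.mpr ⟨mem_iff_lt_rowLen.mpr hj', rfl⟩
    rw [← IH j' (by omega)] at hmem
    exact mem_filter.mpr ⟨(mem_filter.mp hmem).1, rfl⟩
  have := card_le_card hsub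
  rw [card_image_of_injective _ (Prod.mk_right_injective c.1),
    card_insert_of_notMem (by simpa using hlen), card_range, hrow] at this
  omega

variable {α : Type*} {μ : YoungDiagram}

def rowGroup (T : α ≃ μ.cells) : Subgroup (Perm α) :=
  Perm.fiberSubgroup fun a => (T a : ℕ × ℕ).1

def colGroup (T : α ≃ μ.cells) : Subgroup (Perm α) :=
  Perm.fiberSubgroup fun a => (T a : ℕ × ℕ).2

theorem disjoint_rowGroup_colGroup (T : α ≃ μ.cells) : Disjoint (rowGroup T) (colGroup T) :=
  Perm.disjoint_fiberSubgroup (Subtype.val_injective.comp T.injective)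

variable [Fintype α]

theorem card_filter_tableau (T : α ≃ μ.cells) (P : ℕ × ℕ → Prop) [DecidablePred P] :
    #(univ.filter fun a => P (T a)) = #(μ.cells.filter P) := by
  refine card_bij (fun a _ => (T a : ℕ × ℕ)) (by simp)
    (fun a _ b _ hab => T.injective (Subtype.ext hab)) fun c hc => ?_
  obtain ⟨hcμ, hPc⟩ := mem_filter.mp hc
  exact ⟨T.symm ⟨c, hcμ⟩, by simpa using hPc, by simp⟩

theorem exists_tableau_fst_snd (T T' : α ≃ μ.cells)
    (h : ∀ a b, (T a : ℕ × ℕ).1 = (T b : ℕ × ℕ).1 →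
      (T' a : ℕ × ℕ).2 = (T' b : ℕ × ℕ).2 → a = b) :
    ∃ S : α ≃ μ.cells, ∀ a, (S a : ℕ × ℕ) = ((T a : ℕ × ℕ).1, (T' a : ℕ × ℕ).2) := by
  classical
  set φ : α → ℕ × ℕ := fun a => ((T a : ℕ × ℕ).1, (T' a : ℕ × ℕ).2)
  have hφ : Function.Injective φ := fun a b hab =>
    h a b (Prod.ext_iff.mp hab).1 (Prod.ext_iff.mp hab).2
  have himage : univ.image φ = μ.cells := by
    refine eq_cells_of_card_filter μ (fun i => ?_) (fun j => ?_) <;>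
      rw [filter_image, card_image_of_injective _ hφ]
    · exact (card_filter_tableau T (·.1 = i)).trans μ.rowLen_eq_card.symm
    · exact (card_filter_tableau T' (·.2 = j)).trans μ.colLen_eq_card.symm
  have hmem : ∀ a, φ a ∈ μ.cells := fun a => himage ▸ mem_image_of_mem φ (mem_univ a)
  refine ⟨Equiv.ofBijective (fun a => ⟨φ a, hmem a⟩) ?_, fun a => rfl⟩
  exact (Fintype.bijective_iff_injective_and_card _).mpr
    ⟨fun a b hab => hφ (congrArg Subtype.val hab), Fintype.card_congr T⟩

theorem exists_rowGroup_mul_colGroup_or [DecidableEq α] (T : α ≃ μ.cells) (g : Perm α) :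
    (∃ p ∈ rowGroup T, ∃ q ∈ colGroup T, g = p * q) ∨
      ∃ p ∈ rowGroup T, ∃ q ∈ colGroup T, Perm.sign q = -1 ∧ p * g * q = g := by
  by_cases h : ∃ a b, a ≠ b ∧ (T a : ℕ × ℕ).1 = (T b : ℕ × ℕ).1 ∧
      (T (g⁻¹ a) : ℕ × ℕ).2 = (T (g⁻¹ b) : ℕ × ℕ).2
  · obtain ⟨a, b, hab, hrow, hcol⟩ := h
    refine .inr ⟨swap a b, Perm.swap_mem_fiberSubgroup hrow, swap (g⁻¹ a) (g⁻¹ b),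
      Perm.swap_mem_fiberSubgroup hcol, Perm.sign_swap (by simpa using hab), ?_⟩
    rw [swap_apply_apply]
    simp [mul_assoc]
  · obtain ⟨S, hS⟩ := exists_tableau_fst_snd T ((g⁻¹ : Perm α).trans T)
      fun a b hrow hcol => by_contra fun hab => h ⟨a, b, hab, hrow, hcol⟩
    set p : Perm α := S.trans T.symm
    have hp : p ∈ rowGroup T := fun a => by simp [p, hS]
    have hpg : p * g ∈ colGroup T := fun a => by simp [p, hS]
    exact .inl ⟨p⁻¹, inv_mem hp, p * g, hpg, by group⟩

end YoungDiagram

theorem young_symmetrizer_quasi_idempotent_general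
    (n : ℕ) (μ : YoungDiagram) (T : Fin n ≃ ↥μ.cells) :
    letI R : Finset (Equiv.Perm (Fin n)) :=
      Finset.univ.filter fun g => ∀ i : Fin n, ((T (g i) : ℕ × ℕ)).1 = ((T i : ℕ × ℕ)).1
    letI C : Finset (Equiv.Perm (Fin n)) :=
      Finset.univ.filter fun g => ∀ i : Fin n, ((T (g i) : ℕ × ℕ)).2 = ((T i : ℕ × ℕ)).2
    letI cT : MonoidAlgebra ℚ (Equiv.Perm (Fin n)) :=
      ∑ g ∈ R, MonoidAlgebra.single g (1 : ℚ)
    letI dT : MonoidAlgebra ℚ (Equiv.Perm (Fin n)) :=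
      ∑ h ∈ C, MonoidAlgebra.single h (((Equiv.Perm.sign h : ℤ) : ℚ))
    ∃ nT : ℚ, nT ≠ 0 ∧ (cT * dT) * (cT * dT) = nT • (cT * dT) := by
  classical
  rw [sum_subtype (p := (· ∈ YoungDiagram.rowGroup T)) _ fun _ => by rw [mem_filter_univ]; rfl,
    sum_subtype (p := (· ∈ YoungDiagram.colGroup T)) _ fun _ => by rw [mem_filter_univ]; rfl]
  exact exists_symmetrizer_mul_self_eq_smul (YoungDiagram.disjoint_rowGroup_colGroup T)
    (YoungDiagram.exists_rowGroup_mul_colGroup_or T)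

/-- For a Young tableau `T` (a bijective filling of the cells of a Young diagram
`μ` with `n = |μ|` boxes by `{0, …, n-1}`), with row group `R(T)` and column group `C(T)`,
the elements `c_T = Σ_{g ∈ R(T)} g` and `d_T = Σ_{h ∈ C(T)} sgn(h)·h` of `ℚ[Σ_n]` give a
Young symmetrizer `e_T = c_T · d_T` satisfying `e_T² = n_T • e_T` for some nonzero rational
number `n_T`; in particular `e_T` is a quasi-idempotent. -/
theorem young_symmetrizer_quasi_idempotent
    (n : ℕ) (μ : YoungDiagram) (hμ : μ.cells.card = n) (T : Fin n ≃ ↥μ.cells) :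
    letI R : Finset (Equiv.Perm (Fin n)) :=
      Finset.univ.filter fun g => ∀ i : Fin n, ((T (g i) : ℕ × ℕ)).1 = ((T i : ℕ × ℕ)).1
    letI C : Finset (Equiv.Perm (Fin n)) :=
      Finset.univ.filter fun g => ∀ i : Fin n, ((T (g i) : ℕ × ℕ)).2 = ((T i : ℕ × ℕ)).2
    letI cT : MonoidAlgebra ℚ (Equiv.Perm (Fin n)) :=
      ∑ g ∈ R, MonoidAlgebra.single g (1 : ℚ)
    letI dT : MonoidAlgebra ℚ (Equiv.Perm (Fin n)) :=
      ∑ h ∈ C, MonoidAlgebra.single h (((Equiv.Perm.sign h : ℤ) : ℚ))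
    ∃ nT : ℚ, nT ≠ 0 ∧ (cT * dT) * (cT * dT) = nT • (cT * dT) :=
  young_symmetrizer_quasi_idempotent_general n μ T
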